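/- Fix an integer s ≥ 1. Let M be the free R-module on generators x0, x1_1, …, x1_s, y1_1, …, y1_s, x2, y2, x3, y3, and let d : M → M be the R-linear map with d(x0) = U·y1_1; d(x1_j) = U²·y1_j + U·y1_{j+1} for 1 ≤ j ≤ s−1; d(x1_s) = U²·y1_s; d(x2) = x1_s + U·y2; d(y2) = U·y1_s; d(x3) = U·y3 + y2; d(y3) = y1_s; and d(y1_j) = 0 for all j. Then d ∘ d = 0, the element z = U^{s−1}·x0 + Σ_{j=1}^{s−1} U^{s−1−j}·x1_j + y2 is a cycle, and the quotient of the homology H = ker d / im d by its U-torsion submodule is a free R-module of rank 1, generated by the image of the class of z. -/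
import Mathlib


noncomputable section

/-- `R = 𝔽₂[U]`, the polynomial ring in one variable over the field with two elements. -/
abbrev R : Type := Polynomial (ZMod 2)

/-- The variable `U` of `R = 𝔽₂[U]`. -/
def U : R := Polynomial.X

/-- The free `R`-module on the generators `x0, x2, y2, x3, y3` (indexed by `Fin 5`),
`x1_1, …, x1_s` (the first `Fin s` factor) and `y1_1, …, y1_s` (the second `Fin s`
factor). -/
abbrev M (s : ℕ) : Type := (Fin 5 ⊕ Fin s ⊕ Fin s) → R

def x0 (s : ℕ) : M s := Pi.single (Sum.inl 0) 1
def x2 (s : ℕ) : M s := Pi.single (Sum.inl 1) 1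
def y2 (s : ℕ) : M s := Pi.single (Sum.inl 2) 1
def x3 (s : ℕ) : M s := Pi.single (Sum.inl 3) 1
def y3 (s : ℕ) : M s := Pi.single (Sum.inl 4) 1
/-- `x1 s j` is the generator `x1_{j+1}` (so `j : Fin s` is the 0-based index). -/
def x1 (s : ℕ) (j : Fin s) : M s := Pi.single (Sum.inr (Sum.inl j)) 1
/-- `y1 s j` is the generator `y1_{j+1}` (so `j : Fin s` is the 0-based index). -/
def y1 (s : ℕ) (j : Fin s) : M s := Pi.single (Sum.inr (Sum.inr j)) 1

/- ==================== auxiliary definitions ==================== -/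

/-- The cycle `z`. -/
def Z (s : ℕ) : M s :=
  (U ^ (s - 1)) • x0 s
    + (∑ j : Fin s, if (j : ℕ) + 1 < s then (U ^ (s - 2 - (j : ℕ))) • x1 s j else 0)
    + y2 s

/-- `y1` reindexed over `ℕ`. -/
def Y1 (s : ℕ) (i : ℕ) : M s := if h : i < s then y1 s ⟨i, h⟩ else 0

/-- `G1 s i = U^(s-i) • y1_i`. -/
def G1 (s : ℕ) (i : ℕ) : M s := (U ^ (s - i)) • Y1 s i

def F1 (s : ℕ) (i : ℕ) : M s := if i + 1 < s then G1 s i + G1 s (i + 1) else 0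

lemma two_eq_zero : (2 : R) = 0 := by
  have h := CharP.cast_eq_zero R 2
  simpa using h

lemma add_self_eq_zero' {N : Type} [AddCommGroup N] [Module R N] (x : N) : x + x = 0 := by
  have h := two_smul R x
  rw [two_eq_zero, zero_smul] at h
  exact h.symm

lemma neg_eq_self' {N : Type} [AddCommGroup N] [Module R N] (x : N) : -x = x :=
  neg_eq_of_add_eq_zero_left (add_self_eq_zero' x)

lemma U_ne_zero : (U : R) ≠ 0 := Polynomial.X_ne_zero

section Aux

variable {s : ℕ} (hs : 1 ≤ s) (d : M s →ₗ[R] M s)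

lemma d_expand (m : M s) : d m = ∑ i, m i • d (Pi.single i 1) := by
  conv_lhs => rw [show m = ∑ i, Pi.single i (m i) from (Finset.univ_sum_single m).symm]
  rw [map_sum]
  refine Finset.sum_congr rfl fun i _ => ?_
  have h : Pi.single i (m i) = m i • (Pi.single i 1 : M s) := by
    funext c
    simp [Pi.single_apply, mul_ite]
  rw [h, map_smul]

lemma d_sum (hy1 : ∀ j : Fin s, d (y1 s j) = 0) (m : M s) (c : Fin 5 ⊕ Fin s ⊕ Fin s) :
    d m c =
      m (Sum.inl 0) * d (x0 s) c + m (Sum.inl 1) * d (x2 s) c + m (Sum.inl 2) * d (y2 s) c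
      + m (Sum.inl 3) * d (x3 s) c + m (Sum.inl 4) * d (y3 s) c
      + ∑ j : Fin s, m (Sum.inr (Sum.inl j)) * d (x1 s j) c := by
  have hy1' : ∀ k : Fin s, d (Pi.single (Sum.inr (Sum.inr k)) (1 : R)) = 0 := hy1
  rw [d_expand d m, Finset.sum_apply]
  simp only [Pi.smul_apply, smul_eq_mul]
  rw [Fintype.sum_sum_type, Fintype.sum_sum_type, Fin.sum_univ_five]
  simp only [hy1', Pi.zero_apply, mul_zero, Finset.sum_const_zero, add_zero]
  rfl

end Aux

section Aux2

variable {s : ℕ} (hs : 1 ≤ s) (d : M s →ₗ[R] M s)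

lemma dx1_uniform
    (hx1 : ∀ j : Fin s, ∀ h : (j : ℕ) + 1 < s,
      d (x1 s j) = (U ^ 2) • y1 s j + U • y1 s ⟨(j : ℕ) + 1, h⟩)
    (hx1s : d (x1 s ⟨s - 1, Nat.sub_lt hs Nat.one_pos⟩)
      = (U ^ 2) • y1 s ⟨s - 1, Nat.sub_lt hs Nat.one_pos⟩)
    (j : Fin s) :
    d (x1 s j) = (U ^ 2) • y1 s j
      + (if h : (j : ℕ) + 1 < s then U • y1 s ⟨(j : ℕ) + 1, h⟩ else 0) := by
  by_cases h : (j : ℕ) + 1 < s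
  · rw [dif_pos h]; exact hx1 j h
  · rw [dif_neg h, add_zero]
    have hj : j = ⟨s - 1, Nat.sub_lt hs Nat.one_pos⟩ :=
      Fin.ext (show (j : ℕ) = s - 1 by have := j.2; omega)
    rw [hj, hx1s]

end Aux2

section Aux3

variable {s : ℕ} (hs : 1 ≤ s) (d : M s →ₗ[R] M s)

lemma co_x0
    (hx0 : d (x0 s) = U • y1 s ⟨0, hs⟩)
    (hx1 : ∀ j : Fin s, ∀ h : (j : ℕ) + 1 < s,
      d (x1 s j) = (U ^ 2) • y1 s j + U • y1 s ⟨(j : ℕ) + 1, h⟩)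
    (hx1s : d (x1 s ⟨s - 1, Nat.sub_lt hs Nat.one_pos⟩)
      = (U ^ 2) • y1 s ⟨s - 1, Nat.sub_lt hs Nat.one_pos⟩)
    (hx2 : d (x2 s) = x1 s ⟨s - 1, Nat.sub_lt hs Nat.one_pos⟩ + U • y2 s)
    (hy2 : d (y2 s) = U • y1 s ⟨s - 1, Nat.sub_lt hs Nat.one_pos⟩)
    (hx3 : d (x3 s) = U • y3 s + y2 s)
    (hy3 : d (y3 s) = y1 s ⟨s - 1, Nat.sub_lt hs Nat.one_pos⟩)
    (hy1 : ∀ j : Fin s, d (y1 s j) = 0)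
    (m : M s) : d m (Sum.inl 0) = 0 := by
  rw [d_sum d hy1 m, hx0, hx2, hy2, hx3, hy3]
  simp only [dx1_uniform hs d hx1 hx1s]
  simp [x1, y1, y2, y3, Pi.single_apply, dite_apply, mul_ite]

lemma co_x1top
    (hx0 : d (x0 s) = U • y1 s ⟨0, hs⟩)
    (hx1 : ∀ j : Fin s, ∀ h : (j : ℕ) + 1 < s,
      d (x1 s j) = (U ^ 2) • y1 s j + U • y1 s ⟨(j : ℕ) + 1, h⟩)
    (hx1s : d (x1 s ⟨s - 1, Nat.sub_lt hs Nat.one_pos⟩)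
      = (U ^ 2) • y1 s ⟨s - 1, Nat.sub_lt hs Nat.one_pos⟩)
    (hx2 : d (x2 s) = x1 s ⟨s - 1, Nat.sub_lt hs Nat.one_pos⟩ + U • y2 s)
    (hy2 : d (y2 s) = U • y1 s ⟨s - 1, Nat.sub_lt hs Nat.one_pos⟩)
    (hx3 : d (x3 s) = U • y3 s + y2 s)
    (hy3 : d (y3 s) = y1 s ⟨s - 1, Nat.sub_lt hs Nat.one_pos⟩)
    (hy1 : ∀ j : Fin s, d (y1 s j) = 0)
    (m : M s) : d m (Sum.inr (Sum.inl ⟨s - 1, Nat.sub_lt hs Nat.one_pos⟩)) = m (Sum.inl 1) := by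
  rw [d_sum d hy1 m, hx0, hx2, hy2, hx3, hy3]
  simp only [dx1_uniform hs d hx1 hx1s]
  simp [x1, y1, y2, y3, Pi.single_apply, dite_apply, mul_ite]

lemma co_y3
    (hx0 : d (x0 s) = U • y1 s ⟨0, hs⟩)
    (hx1 : ∀ j : Fin s, ∀ h : (j : ℕ) + 1 < s,
      d (x1 s j) = (U ^ 2) • y1 s j + U • y1 s ⟨(j : ℕ) + 1, h⟩)
    (hx1s : d (x1 s ⟨s - 1, Nat.sub_lt hs Nat.one_pos⟩)
      = (U ^ 2) • y1 s ⟨s - 1, Nat.sub_lt hs Nat.one_pos⟩)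
    (hx2 : d (x2 s) = x1 s ⟨s - 1, Nat.sub_lt hs Nat.one_pos⟩ + U • y2 s)
    (hy2 : d (y2 s) = U • y1 s ⟨s - 1, Nat.sub_lt hs Nat.one_pos⟩)
    (hx3 : d (x3 s) = U • y3 s + y2 s)
    (hy3 : d (y3 s) = y1 s ⟨s - 1, Nat.sub_lt hs Nat.one_pos⟩)
    (hy1 : ∀ j : Fin s, d (y1 s j) = 0)
    (m : M s) : d m (Sum.inl 4) = U * m (Sum.inl 3) := by
  rw [d_sum d hy1 m, hx0, hx2, hy2, hx3, hy3]
  simp only [dx1_uniform hs d hx1 hx1s]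
  simp [x1, y1, y2, y3, Pi.single_apply, dite_apply, mul_ite]
  ring

end Aux3

section Aux4

variable {s : ℕ} (hs : 1 ≤ s) (d : M s →ₗ[R] M s)

lemma xsum (b : Fin s → R) (k : ℕ) (hk : k < s) :
    (∑ j : Fin s, b j * ((U ^ 2) • y1 s j
        + (if h : (j : ℕ) + 1 < s then U • y1 s ⟨(j : ℕ) + 1, h⟩ else 0))
        (Sum.inr (Sum.inr ⟨k, hk⟩)))
    = U ^ 2 * b ⟨k, hk⟩
      + (if k = 0 then 0 else U * b ⟨k - 1, lt_of_le_of_lt (Nat.sub_le _ _) hk⟩) := by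
  have expand : ∀ j : Fin s,
      b j * ((U ^ 2) • y1 s j
        + (if h : (j : ℕ) + 1 < s then U • y1 s ⟨(j : ℕ) + 1, h⟩ else 0))
        (Sum.inr (Sum.inr ⟨k, hk⟩))
      = (if (⟨k, hk⟩ : Fin s) = j then U ^ 2 * b j else 0)
        + (if k = (j : ℕ) + 1 then U * b j else 0) := by
    intro j
    simp only [Pi.add_apply, Pi.smul_apply, smul_eq_mul, dite_apply, Pi.zero_apply, y1,
      Pi.single_apply]
    rw [mul_add]
    congr 1
    · by_cases h1 : (⟨k, hk⟩ : Fin s) = j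
      · rw [if_pos (by rw [h1]), if_pos h1]; ring
      · rw [if_neg (by simp only [Sum.inr.injEq]; exact h1), if_neg h1, mul_zero, mul_zero]
    · by_cases h2 : k = (j : ℕ) + 1
      · have hlt : (j : ℕ) + 1 < s := by omega
        rw [dif_pos hlt, if_pos h2,
          if_pos (show Sum.inr (Sum.inr (⟨k, hk⟩ : Fin s))
            = (Sum.inr (Sum.inr (⟨(j : ℕ) + 1, hlt⟩ : Fin s)) : Fin 5 ⊕ Fin s ⊕ Fin s) by
              congr 2; exact Fin.ext h2)]
        ring
      · by_cases hlt : (j : ℕ) + 1 < s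
        · rw [dif_pos hlt, if_neg h2,
            if_neg (show ¬ (Sum.inr (Sum.inr (⟨k, hk⟩ : Fin s))
              = (Sum.inr (Sum.inr (⟨(j : ℕ) + 1, hlt⟩ : Fin s)) : Fin 5 ⊕ Fin s ⊕ Fin s)) by
                simp only [Sum.inr.injEq]
                intro hE
                exact h2 (congrArg Fin.val hE)),
            mul_zero, mul_zero]
        · rw [dif_neg hlt, if_neg h2, mul_zero]
  rw [Finset.sum_congr rfl fun j _ => expand j, Finset.sum_add_distrib]
  congr 1
  · rw [Finset.sum_ite_eq]; simp
  · by_cases h0 : k = 0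
    · rw [if_pos h0]
      apply Finset.sum_eq_zero
      intro j _
      rw [if_neg (by omega)]
    · rw [if_neg h0]
      rw [Finset.sum_eq_single (⟨k - 1, lt_of_le_of_lt (Nat.sub_le _ _) hk⟩ : Fin s)]
      · rw [if_pos (show k = k - 1 + 1 by omega)]
      · intro j _ hne
        rw [if_neg ?_]
        intro hE
        exact hne (Fin.ext (show (j : ℕ) = k - 1 by omega))
      · intro h; exact absurd (Finset.mem_univ _) h

end Aux4

section Aux5

variable {s : ℕ} (hs : 1 ≤ s) (d : M s →ₗ[R] M s)

lemma co_y1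
    (hx0 : d (x0 s) = U • y1 s ⟨0, hs⟩)
    (hx1 : ∀ j : Fin s, ∀ h : (j : ℕ) + 1 < s,
      d (x1 s j) = (U ^ 2) • y1 s j + U • y1 s ⟨(j : ℕ) + 1, h⟩)
    (hx1s : d (x1 s ⟨s - 1, Nat.sub_lt hs Nat.one_pos⟩)
      = (U ^ 2) • y1 s ⟨s - 1, Nat.sub_lt hs Nat.one_pos⟩)
    (hx2 : d (x2 s) = x1 s ⟨s - 1, Nat.sub_lt hs Nat.one_pos⟩ + U • y2 s)
    (hy2 : d (y2 s) = U • y1 s ⟨s - 1, Nat.sub_lt hs Nat.one_pos⟩)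
    (hx3 : d (x3 s) = U • y3 s + y2 s)
    (hy3 : d (y3 s) = y1 s ⟨s - 1, Nat.sub_lt hs Nat.one_pos⟩)
    (hy1 : ∀ j : Fin s, d (y1 s j) = 0)
    (m : M s) (k : ℕ) (hk : k < s) :
    d m (Sum.inr (Sum.inr ⟨k, hk⟩)) =
      (if k = 0 then U * m (Sum.inl 0)
        else U * m (Sum.inr (Sum.inl ⟨k - 1, lt_of_le_of_lt (Nat.sub_le _ _) hk⟩)))
      + (if k = s - 1 then U * m (Sum.inl 2) + m (Sum.inl 4) else 0)
      + U ^ 2 * m (Sum.inr (Sum.inl ⟨k, hk⟩)) := by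
  rw [d_sum d hy1 m, hx0, hx2, hy2, hx3, hy3]
  rw [Finset.sum_congr rfl fun j _ => by rw [dx1_uniform hs d hx1 hx1s j]]
  rw [xsum]
  simp only [Pi.smul_apply, Pi.add_apply, smul_eq_mul, y1, y2, y3, x1, Pi.single_apply,
    Sum.inr.injEq, Sum.inl.injEq, Fin.mk.injEq, reduceCtorEq, if_false, mul_zero, zero_add,
    mul_ite, mul_one, add_zero]
  by_cases h0 : k = 0 <;> by_cases h1 : k = s - 1 <;>
    simp [h0, h1] <;> first | ring1 | (split_ifs <;> first | ring1 | (exfalso; omega))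
end Aux5

section Aux6

variable {s : ℕ} (hs : 1 ≤ s) (d : M s →ₗ[R] M s)

lemma dd_zero
    (hx0 : d (x0 s) = U • y1 s ⟨0, hs⟩)
    (hx1 : ∀ j : Fin s, ∀ h : (j : ℕ) + 1 < s,
      d (x1 s j) = (U ^ 2) • y1 s j + U • y1 s ⟨(j : ℕ) + 1, h⟩)
    (hx1s : d (x1 s ⟨s - 1, Nat.sub_lt hs Nat.one_pos⟩)
      = (U ^ 2) • y1 s ⟨s - 1, Nat.sub_lt hs Nat.one_pos⟩)
    (hx2 : d (x2 s) = x1 s ⟨s - 1, Nat.sub_lt hs Nat.one_pos⟩ + U • y2 s)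
    (hy2 : d (y2 s) = U • y1 s ⟨s - 1, Nat.sub_lt hs Nat.one_pos⟩)
    (hx3 : d (x3 s) = U • y3 s + y2 s)
    (hy3 : d (y3 s) = y1 s ⟨s - 1, Nat.sub_lt hs Nat.one_pos⟩)
    (hy1 : ∀ j : Fin s, d (y1 s j) = 0) :
    d ∘ₗ d = 0 := by
  have key : ∀ i : Fin 5 ⊕ Fin s ⊕ Fin s, d (d (Pi.single i 1)) = 0 := by
    rintro (i | j | k)
    · fin_cases i
      · show d (d (x0 s)) = 0
        rw [hx0, map_smul, hy1, smul_zero]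
      · show d (d (x2 s)) = 0
        rw [hx2, map_add, map_smul, hx1s, hy2, smul_smul, ← pow_two]
        exact add_self_eq_zero' _
      · show d (d (y2 s)) = 0
        rw [hy2, map_smul, hy1, smul_zero]
      · show d (d (x3 s)) = 0
        rw [hx3, map_add, map_smul, hy3, hy2]
        exact add_self_eq_zero' _
      · show d (d (y3 s)) = 0
        rw [hy3, hy1]
    · show d (d (x1 s j)) = 0
      by_cases h : (j : ℕ) + 1 < s
      · rw [hx1 j h, map_add, map_smul, map_smul, hy1, hy1, smul_zero, smul_zero, add_zero]
      · have hj : j = ⟨s - 1, Nat.sub_lt hs Nat.one_pos⟩ :=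
          Fin.ext (show (j : ℕ) = s - 1 by have := j.2; omega)
        rw [hj, hx1s, map_smul, hy1, smul_zero]
    · show d (d (y1 s k)) = 0
      rw [hy1, map_zero]
  apply LinearMap.ext
  intro m
  rw [LinearMap.comp_apply, d_expand d m, map_sum]
  simp only [map_smul, key, smul_zero, Finset.sum_const_zero, LinearMap.zero_apply]

end Aux6

section Aux7

variable {s : ℕ} (hs : 1 ≤ s) (d : M s →ₗ[R] M s)

lemma Z_cycle
    (hx0 : d (x0 s) = U • y1 s ⟨0, hs⟩)
    (hx1 : ∀ j : Fin s, ∀ h : (j : ℕ) + 1 < s,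
      d (x1 s j) = (U ^ 2) • y1 s j + U • y1 s ⟨(j : ℕ) + 1, h⟩)
    (hy2 : d (y2 s) = U • y1 s ⟨s - 1, Nat.sub_lt hs Nat.one_pos⟩) :
    d (Z s) = 0 := by
  have hfirst : (U ^ (s - 1)) • (U • y1 s ⟨0, hs⟩) = G1 s 0 := by
    rw [G1, Y1, dif_pos (show (0 : ℕ) < s from hs), smul_smul, ← pow_succ,
      show s - 1 + 1 = s - 0 by omega]
  have hlast : U • y1 s ⟨s - 1, Nat.sub_lt hs Nat.one_pos⟩ = G1 s (s - 1) := by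
    rw [G1, Y1, dif_pos (Nat.sub_lt hs Nat.one_pos), show s - (s - 1) = 1 by omega, pow_one]
  have hterm : ∀ j : Fin s,
      d (if (j : ℕ) + 1 < s then (U ^ (s - 2 - (j : ℕ))) • x1 s j else 0)
        = F1 s (j : ℕ) := by
    intro j
    rw [F1]
    by_cases h : (j : ℕ) + 1 < s
    · rw [if_pos h, if_pos h, map_smul, hx1 j h, smul_add, smul_smul, smul_smul,
        show U ^ (s - 2 - (j : ℕ)) * U ^ 2 = U ^ (s - (j : ℕ)) by rw [← pow_add]; congr 1; omega,
        show U ^ (s - 2 - (j : ℕ)) * U = U ^ (s - ((j : ℕ) + 1)) by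
          rw [← pow_succ]; congr 1; omega]
      rw [G1, G1, Y1, Y1, dif_pos j.2, dif_pos h, Fin.eta]
    · rw [if_neg h, if_neg h, map_zero]
  rw [Z, map_add, map_add, map_smul, hx0, hy2, map_sum]
  rw [Finset.sum_congr rfl fun j _ => hterm j]
  rw [hfirst, hlast]
  rw [show (∑ j : Fin s, F1 s (j : ℕ)) = ∑ i ∈ Finset.range s, F1 s i from
    Fin.sum_univ_eq_sum_range (F1 s) s]
  have hsub : (∑ i ∈ Finset.range s, F1 s i) = ∑ i ∈ Finset.range (s - 1), F1 s i := by
    refine (Finset.sum_subset (Finset.range_subset_range.mpr (by omega)) ?_).symm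
    intro x hx hnx
    rw [Finset.mem_range] at hx
    rw [Finset.mem_range] at hnx
    rw [F1, if_neg (by omega)]
  have hsplit : (∑ i ∈ Finset.range (s - 1), F1 s i)
      = (∑ i ∈ Finset.range (s - 1), G1 s i) + ∑ i ∈ Finset.range (s - 1), G1 s (i + 1) := by
    rw [← Finset.sum_add_distrib]
    refine Finset.sum_congr rfl fun i hi => ?_
    rw [Finset.mem_range] at hi
    rw [F1, if_pos (by omega)]
  rw [hsub, hsplit]
  have htel : (∑ i ∈ Finset.range (s - 1), G1 s (i + 1)) + G1 s 0
      = (∑ i ∈ Finset.range (s - 1), G1 s i) + G1 s (s - 1) := by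
    rw [← Finset.sum_range_succ' (G1 s) (s - 1), ← Finset.sum_range_succ (G1 s) (s - 1)]
  have hre : G1 s 0 + ((∑ i ∈ Finset.range (s - 1), G1 s i)
        + ∑ i ∈ Finset.range (s - 1), G1 s (i + 1)) + G1 s (s - 1)
      = ((∑ i ∈ Finset.range (s - 1), G1 s (i + 1)) + G1 s 0)
        + ((∑ i ∈ Finset.range (s - 1), G1 s i) + G1 s (s - 1)) := by abel
  rw [hre, htel]
  exact add_self_eq_zero' _

end Aux7

section Aux8

variable {s : ℕ} (hs : 1 ≤ s) (d : M s →ₗ[R] M s)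

lemma y1_torsion
    (hx1 : ∀ j : Fin s, ∀ h : (j : ℕ) + 1 < s,
      d (x1 s j) = (U ^ 2) • y1 s j + U • y1 s ⟨(j : ℕ) + 1, h⟩)
    (hy3 : d (y3 s) = y1 s ⟨s - 1, Nat.sub_lt hs Nat.one_pos⟩)
    (k : Fin s) : (U ^ (2 * s)) • y1 s k ∈ LinearMap.range d := by
  have tor0 : ∀ i : ℕ, i < s →
      (U ^ (2 * i)) • y1 s ⟨s - 1 - i, by omega⟩ ∈ LinearMap.range d := by
    intro i
    induction i with
    | zero =>
      intro _
      refine ⟨y3 s, ?_⟩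
      rw [hy3]
      rw [show (2 * 0 : ℕ) = 0 by omega, pow_zero, one_smul]
      rfl
    | succ i ih =>
      intro h
      have hi : i < s := by omega
      have hlt : s - 1 - (i + 1) + 1 < s := by omega
      have e1 : d (x1 s ⟨s - 1 - (i + 1), by omega⟩)
          = (U ^ 2) • y1 s ⟨s - 1 - (i + 1), by omega⟩ + U • y1 s ⟨s - 1 - i, by omega⟩ := by
        have h2 := hx1 ⟨s - 1 - (i + 1), by omega⟩ hlt
        have hidx : (⟨((⟨s - 1 - (i + 1), by omega⟩ : Fin s) : ℕ) + 1, hlt⟩ : Fin s)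
            = (⟨s - 1 - i, by omega⟩ : Fin s) :=
          Fin.ext (show s - 1 - (i + 1) + 1 = s - 1 - i by omega)
        rw [h2, hidx]
      have e2 : (U ^ 2) • y1 s ⟨s - 1 - (i + 1), by omega⟩
          = d (x1 s ⟨s - 1 - (i + 1), by omega⟩) + U • y1 s ⟨s - 1 - i, by omega⟩ := by
        rw [e1, add_assoc, add_self_eq_zero', add_zero]
      have e3 : (U ^ (2 * (i + 1))) • y1 s ⟨s - 1 - (i + 1), by omega⟩
          = (U ^ (2 * i)) • ((U ^ 2) • y1 s ⟨s - 1 - (i + 1), by omega⟩) := by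
        rw [smul_smul, ← pow_add, show 2 * i + 2 = 2 * (i + 1) by omega]
      rw [e3, e2, smul_add]
      refine Submodule.add_mem _ (Submodule.smul_mem _ _ (LinearMap.mem_range_self d _)) ?_
      rw [smul_comm]
      exact Submodule.smul_mem _ _ (ih hi)
  have h1 : s - 1 - (s - 1 - (k : ℕ)) = (k : ℕ) := by have := k.2; omega
  have h2 := tor0 (s - 1 - (k : ℕ)) (by have := k.2; omega)
  have h3 : (⟨s - 1 - (s - 1 - (k : ℕ)), by omega⟩ : Fin s) = k := Fin.ext (by simpa using h1)
  rw [h3] at h2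
  have h4 : (U ^ (2 * s)) • y1 s k
      = (U ^ (2 * s - 2 * (s - 1 - (k : ℕ)))) • ((U ^ (2 * (s - 1 - (k : ℕ)))) • y1 s k) := by
    rw [smul_smul, ← pow_add]
    congr 2
    have := k.2
    omega
  rw [h4]
  exact Submodule.smul_mem _ _ h2

end Aux8

section Aux9

variable {s : ℕ} (hs : 1 ≤ s) (d : M s →ₗ[R] M s)

lemma exists_r
    (hx0 : d (x0 s) = U • y1 s ⟨0, hs⟩)
    (hx1 : ∀ j : Fin s, ∀ h : (j : ℕ) + 1 < s,
      d (x1 s j) = (U ^ 2) • y1 s j + U • y1 s ⟨(j : ℕ) + 1, h⟩)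
    (hx1s : d (x1 s ⟨s - 1, Nat.sub_lt hs Nat.one_pos⟩)
      = (U ^ 2) • y1 s ⟨s - 1, Nat.sub_lt hs Nat.one_pos⟩)
    (hx2 : d (x2 s) = x1 s ⟨s - 1, Nat.sub_lt hs Nat.one_pos⟩ + U • y2 s)
    (hy2 : d (y2 s) = U • y1 s ⟨s - 1, Nat.sub_lt hs Nat.one_pos⟩)
    (hx3 : d (x3 s) = U • y3 s + y2 s)
    (hy3 : d (y3 s) = y1 s ⟨s - 1, Nat.sub_lt hs Nat.one_pos⟩)
    (hy1 : ∀ j : Fin s, d (y1 s j) = 0)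
    (m : M s) (hm : d m = 0) :
    ∃ r : R, m (Sum.inl 0) = U ^ (s - 1) * r
      ∧ (∀ j : Fin s, (j : ℕ) + 1 < s → m (Sum.inr (Sum.inl j)) = U ^ (s - 2 - (j : ℕ)) * r)
      ∧ m (Sum.inl 4) = U ^ 2 * m (Sum.inr (Sum.inl ⟨s - 1, Nat.sub_lt hs Nat.one_pos⟩))
          + U * r + U * m (Sum.inl 2) := by
  have E : ∀ (k : ℕ) (hk : k < s),
      (if k = 0 then U * m (Sum.inl 0)
        else U * m (Sum.inr (Sum.inl ⟨k - 1, lt_of_le_of_lt (Nat.sub_le _ _) hk⟩)))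
      + (if k = s - 1 then U * m (Sum.inl 2) + m (Sum.inl 4) else 0)
      + U ^ 2 * m (Sum.inr (Sum.inl ⟨k, hk⟩)) = 0 := by
    intro k hk
    have h := co_y1 hs d hx0 hx1 hx1s hx2 hy2 hx3 hy3 hy1 m k hk
    rw [hm] at h
    simp only [Pi.zero_apply] at h
    exact h.symm
  by_cases h2 : 2 ≤ s
  · -- chain of coefficients
    have chainb : ∀ t : ℕ, t + 2 ≤ s →
        m (Sum.inr (Sum.inl ⟨s - 2 - t, by omega⟩))
          = U ^ t * m (Sum.inr (Sum.inl ⟨s - 2, by omega⟩)) := by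
      intro t
      induction t with
      | zero =>
        intro _
        rw [pow_zero, one_mul]
        rfl
      | succ t ih =>
        intro ht
        have hklt : s - 2 - t < s := by omega
        have e := E (s - 2 - t) hklt
        rw [if_neg (by omega), if_neg (by omega), add_zero] at e
        have e' : U * (m (Sum.inr (Sum.inl ⟨s - 2 - t - 1,
              lt_of_le_of_lt (Nat.sub_le _ _) hklt⟩))
            + U * m (Sum.inr (Sum.inl ⟨s - 2 - t, hklt⟩))) = 0 := by
          linear_combination e
        have e'' := (mul_eq_zero.mp e').resolve_left U_ne_zero
        have e3 : m (Sum.inr (Sum.inl ⟨s - 2 - t - 1, lt_of_le_of_lt (Nat.sub_le _ _) hklt⟩))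
            = U * m (Sum.inr (Sum.inl ⟨s - 2 - t, hklt⟩)) := by
          linear_combination e''
            - (U * m (Sum.inr (Sum.inl ⟨s - 2 - t, hklt⟩))) * two_eq_zero
        have hidx : (⟨s - 2 - t - 1, lt_of_le_of_lt (Nat.sub_le _ _) hklt⟩ : Fin s)
            = ⟨s - 2 - (t + 1), by omega⟩ :=
          Fin.ext (show s - 2 - t - 1 = s - 2 - (t + 1) by omega)
        have hidx2 : (⟨s - 2 - t, hklt⟩ : Fin s) = ⟨s - 2 - t, by omega⟩ := rfl
        rw [hidx] at e3
        rw [e3, ih (by omega), ← mul_assoc, ← pow_succ']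
    refine ⟨m (Sum.inr (Sum.inl ⟨s - 2, by omega⟩)), ?_, ?_, ?_⟩
    · -- a = U^(s-1) * r
      have e := E 0 hs
      rw [if_pos rfl, if_neg (by omega), add_zero] at e
      have e' : U * (m (Sum.inl 0) + U * m (Sum.inr (Sum.inl ⟨0, hs⟩))) = 0 := by
        linear_combination e
      have e'' := (mul_eq_zero.mp e').resolve_left U_ne_zero
      have e3 : m (Sum.inl 0) = U * m (Sum.inr (Sum.inl ⟨0, hs⟩)) := by
        linear_combination e'' - (U * m (Sum.inr (Sum.inl ⟨0, hs⟩))) * two_eq_zero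
      have hidx : (⟨0, hs⟩ : Fin s) = ⟨s - 2 - (s - 2), by omega⟩ :=
        Fin.ext (show (0 : ℕ) = s - 2 - (s - 2) by omega)
      rw [hidx] at e3
      rw [e3, chainb (s - 2) (by omega), ← mul_assoc, ← pow_succ',
        show s - 2 + 1 = s - 1 by omega]
    · -- b_j
      intro j hj
      have hidx : j = (⟨s - 2 - (s - 2 - (j : ℕ)), by omega⟩ : Fin s) :=
        Fin.ext (show (j : ℕ) = s - 2 - (s - 2 - (j : ℕ)) by omega)
      conv_lhs => rw [hidx]
      rw [chainb (s - 2 - (j : ℕ)) (by omega)]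
    · -- top equation
      have e := E (s - 1) (Nat.sub_lt hs Nat.one_pos)
      rw [if_neg (by omega), if_pos rfl] at e
      have hidx : (⟨s - 1 - 1, lt_of_le_of_lt (Nat.sub_le _ _) (Nat.sub_lt hs Nat.one_pos)⟩
          : Fin s) = ⟨s - 2, by omega⟩ :=
        Fin.ext (show s - 1 - 1 = s - 2 by omega)
      rw [hidx] at e
      linear_combination e
        - (U ^ 2 * m (Sum.inr (Sum.inl ⟨s - 1, Nat.sub_lt hs Nat.one_pos⟩))
            + U * m (Sum.inr (Sum.inl ⟨s - 2, by omega⟩))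
            + U * m (Sum.inl 2)) * two_eq_zero
  · -- s = 1
    have hs1 : s = 1 := by omega
    refine ⟨m (Sum.inl 0), ?_, ?_, ?_⟩
    · rw [show s - 1 = 0 by omega, pow_zero, one_mul]
    · intro j hj
      exfalso
      have := j.2
      omega
    · have e := E 0 hs
      rw [if_pos rfl, if_pos (by omega)] at e
      have hidx : (⟨s - 1, Nat.sub_lt hs Nat.one_pos⟩ : Fin s) = ⟨0, hs⟩ :=
        Fin.ext (show s - 1 = 0 by omega)
      rw [hidx]
      linear_combination e
        - (U ^ 2 * m (Sum.inr (Sum.inl ⟨0, hs⟩)) + U * m (Sum.inl 0)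
            + U * m (Sum.inl 2)) * two_eq_zero

end Aux9

section Aux10

variable {s : ℕ} (hs : 1 ≤ s) (d : M s →ₗ[R] M s)

lemma Z_inl (i : Fin 5) :
    Z s (Sum.inl i) = if i = 0 then U ^ (s - 1) else if i = 2 then 1 else 0 := by
  rw [Z, Pi.add_apply, Pi.add_apply, Finset.sum_apply]
  rw [Finset.sum_eq_zero fun j _ => by
    simp [x1, Pi.single_apply, ite_apply]]
  fin_cases i <;> simp [x0, y2, Pi.single_apply]

lemma Z_inr1 (j : Fin s) :
    Z s (Sum.inr (Sum.inl j)) = if (j : ℕ) + 1 < s then U ^ (s - 2 - (j : ℕ)) else 0 := by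
  rw [Z, Pi.add_apply, Pi.add_apply, Finset.sum_apply]
  rw [Finset.sum_eq_single j
    (fun b _ hb => by simp [x1, Pi.single_apply, ite_apply, Ne.symm hb])
    (fun h => absurd (Finset.mem_univ _) h)]
  simp [x0, x1, y2, Pi.single_apply, ite_apply]

lemma Z_inr2 (k : Fin s) : Z s (Sum.inr (Sum.inr k)) = 0 := by
  rw [Z, Pi.add_apply, Pi.add_apply, Finset.sum_apply]
  rw [Finset.sum_eq_zero fun j _ => by
    simp [x1, Pi.single_apply, ite_apply]]
  simp [x0, y2, Pi.single_apply]

lemma ysum_inl (h : Fin s → R) (i : Fin 5) :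
    (∑ k : Fin s, h k • y1 s k) (Sum.inl i) = 0 := by
  rw [Finset.sum_apply]
  exact Finset.sum_eq_zero fun j _ => by simp [y1, Pi.single_apply]

lemma ysum_inr1 (h : Fin s → R) (j : Fin s) :
    (∑ k : Fin s, h k • y1 s k) (Sum.inr (Sum.inl j)) = 0 := by
  rw [Finset.sum_apply]
  exact Finset.sum_eq_zero fun j' _ => by simp [y1, Pi.single_apply]

lemma ysum_inr2 (h : Fin s → R) (k : Fin s) :
    (∑ k' : Fin s, h k' • y1 s k') (Sum.inr (Sum.inr k)) = h k := by
  rw [Finset.sum_apply]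
  rw [Finset.sum_eq_single k
    (fun b _ hb => by simp [y1, Pi.single_apply, Ne.symm hb])
    (fun h => absurd (Finset.mem_univ _) h)]
  simp [y1, Pi.single_apply]

end Aux10

section Aux11

variable {s : ℕ} (hs : 1 ≤ s) (d : M s →ₗ[R] M s)

lemma core
    (hx0 : d (x0 s) = U • y1 s ⟨0, hs⟩)
    (hx1 : ∀ j : Fin s, ∀ h : (j : ℕ) + 1 < s,
      d (x1 s j) = (U ^ 2) • y1 s j + U • y1 s ⟨(j : ℕ) + 1, h⟩)
    (hx1s : d (x1 s ⟨s - 1, Nat.sub_lt hs Nat.one_pos⟩)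
      = (U ^ 2) • y1 s ⟨s - 1, Nat.sub_lt hs Nat.one_pos⟩)
    (hx2 : d (x2 s) = x1 s ⟨s - 1, Nat.sub_lt hs Nat.one_pos⟩ + U • y2 s)
    (hy2 : d (y2 s) = U • y1 s ⟨s - 1, Nat.sub_lt hs Nat.one_pos⟩)
    (hx3 : d (x3 s) = U • y3 s + y2 s)
    (hy3 : d (y3 s) = y1 s ⟨s - 1, Nat.sub_lt hs Nat.one_pos⟩)
    (hy1 : ∀ j : Fin s, d (y1 s j) = 0)
    (m : M s) (hm : d m = 0) :
    ∃ r : R, (U ^ (2 * s)) • (m + r • Z s) ∈ LinearMap.range d := by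
  have hc : m (Sum.inl 1) = 0 := by
    have h := co_x1top hs d hx0 hx1 hx1s hx2 hy2 hx3 hy3 hy1 m
    rw [hm] at h
    simpa using h.symm
  have hf : m (Sum.inl 3) = 0 := by
    have h := co_y3 hs d hx0 hx1 hx1s hx2 hy2 hx3 hy3 hy1 m
    rw [hm] at h
    simp only [Pi.zero_apply] at h
    rcases mul_eq_zero.mp h.symm with h1 | h1
    · exact absurd h1 U_ne_zero
    · exact h1
  obtain ⟨r, ha, hb, htop⟩ := exists_r hs d hx0 hx1 hx1s hx2 hy2 hx3 hy3 hy1 m hm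
  refine ⟨r, ?_⟩
  have claim : m + r • Z s
      = m (Sum.inr (Sum.inl ⟨s - 1, Nat.sub_lt hs Nat.one_pos⟩)) • d (x2 s)
        + (U * m (Sum.inr (Sum.inl ⟨s - 1, Nat.sub_lt hs Nat.one_pos⟩))
            + m (Sum.inl 2) + r) • d (x3 s)
        + ∑ k : Fin s, m (Sum.inr (Sum.inr k)) • y1 s k := by
    rw [hx2, hx3]
    funext c
    rcases c with i | j | k
    · simp only [Pi.add_apply, Pi.smul_apply, smul_eq_mul, Z_inl, ysum_inl]
      fin_cases i <;>
        simp [x1, y2, y3, Pi.single_apply, hc, hf] <;>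
        first
          | (linear_combination ha + U ^ (s - 1) * r * two_eq_zero)
          | (linear_combination ha - U ^ (s - 1) * r * two_eq_zero)
          | (linear_combination -ha + U ^ (s - 1) * r * two_eq_zero)
          | (linear_combination -ha - U ^ (s - 1) * r * two_eq_zero)
          | (linear_combination
              (U * m (Sum.inr (Sum.inl ⟨s - 1, Nat.sub_lt hs Nat.one_pos⟩))) * two_eq_zero)
          | (linear_combination
              -(U * m (Sum.inr (Sum.inl ⟨s - 1, Nat.sub_lt hs Nat.one_pos⟩))) * two_eq_zero)
          | (linear_combination htop)
          | (linear_combination -htop)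
          | (linear_combination htop
              + (U * m (Sum.inr (Sum.inl ⟨s - 1, Nat.sub_lt hs Nat.one_pos⟩))) * two_eq_zero)
          | (linear_combination htop
              - (U * m (Sum.inr (Sum.inl ⟨s - 1, Nat.sub_lt hs Nat.one_pos⟩))) * two_eq_zero)
          | (linear_combination -htop
              + (U * m (Sum.inr (Sum.inl ⟨s - 1, Nat.sub_lt hs Nat.one_pos⟩))) * two_eq_zero)
          | (linear_combination -htop
              - (U * m (Sum.inr (Sum.inl ⟨s - 1, Nat.sub_lt hs Nat.one_pos⟩))) * two_eq_zero)
    · simp only [Pi.add_apply, Pi.smul_apply, smul_eq_mul, Z_inr1, ysum_inr1]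
      by_cases hj : (j : ℕ) + 1 < s
      · have hjne : j ≠ ⟨s - 1, Nat.sub_lt hs Nat.one_pos⟩ := by
          intro hE
          have : (j : ℕ) = s - 1 := by rw [hE]
          omega
        rw [if_pos hj]
        simp [x1, y2, y3, Pi.single_apply, hjne]
        first
          | (linear_combination hb j hj + U ^ (s - 2 - (j : ℕ)) * r * two_eq_zero)
          | (linear_combination hb j hj - U ^ (s - 2 - (j : ℕ)) * r * two_eq_zero)
          | (linear_combination -(hb j hj) + U ^ (s - 2 - (j : ℕ)) * r * two_eq_zero)
          | (linear_combination -(hb j hj) - U ^ (s - 2 - (j : ℕ)) * r * two_eq_zero)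
      · have hjeq : j = ⟨s - 1, Nat.sub_lt hs Nat.one_pos⟩ :=
          Fin.ext (show (j : ℕ) = s - 1 by have := j.2; omega)
        rw [if_neg hj, hjeq]
        simp [x1, y2, y3, Pi.single_apply]
    · simp only [Pi.add_apply, Pi.smul_apply, smul_eq_mul, Z_inr2, ysum_inr2]
      simp [x1, y2, y3, Pi.single_apply]
  rw [claim, smul_add, smul_add]
  refine Submodule.add_mem _ (Submodule.add_mem _ ?_ ?_) ?_
  · exact Submodule.smul_mem _ _ (Submodule.smul_mem _ _ (LinearMap.mem_range_self d _))
  · exact Submodule.smul_mem _ _ (Submodule.smul_mem _ _ (LinearMap.mem_range_self d _))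
  · rw [Finset.smul_sum]
    refine Submodule.sum_mem _ fun k _ => ?_
    rw [smul_comm]
    exact Submodule.smul_mem _ _ (y1_torsion hs d hx1 hy3 k)

end Aux11

section Aux12

lemma bijective_toSpanSingleton_abstract {H : Type} [AddCommGroup H] [Module R H] (q : H)
    (hinj : ∀ r : R, ∀ n : ℕ, (U ^ n) • (r • q) = 0 → r = 0)
    (hsur : ∀ x : H, ∃ r : R, ∃ n : ℕ, (U ^ n) • (x - r • q) = 0) :
    Function.Bijective
      (LinearMap.toSpanSingleton R (H ⧸ Submodule.torsion' R H (Submonoid.powers U))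
        (Submodule.Quotient.mk q)) := by
  constructor
  · intro r1 r2 h12
    rw [LinearMap.toSpanSingleton_apply, LinearMap.toSpanSingleton_apply] at h12
    have h : (r1 - r2) • (Submodule.Quotient.mk q :
        H ⧸ Submodule.torsion' R H (Submonoid.powers U)) = 0 := by
      rw [sub_smul, h12, sub_self]
    rw [← Submodule.Quotient.mk_smul, Submodule.Quotient.mk_eq_zero,
      Submodule.mem_torsion'_iff] at h
    obtain ⟨⟨u, n, rfl⟩, hu⟩ := h
    have h2 : (U ^ n) • ((r1 - r2) • q) = 0 := by
      simpa [Submonoid.smul_def] using hu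
    exact sub_eq_zero.mp (hinj _ _ h2)
  · intro x'
    obtain ⟨x, rfl⟩ := Submodule.Quotient.mk_surjective _ x'
    obtain ⟨r, n, hrn⟩ := hsur x
    refine ⟨r, ?_⟩
    rw [LinearMap.toSpanSingleton_apply, ← sub_eq_zero, ← Submodule.Quotient.mk_smul,
      ← Submodule.Quotient.mk_sub, Submodule.Quotient.mk_eq_zero,
      Submodule.mem_torsion'_iff]
    refine ⟨⟨U ^ n, n, rfl⟩, ?_⟩
    have h3 : (U ^ n) • (r • q - x) = 0 := by
      rw [show r • q - x = -(x - r • q) from (neg_sub _ _).symm, smul_neg, hrn, neg_zero]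
    simpa [Submonoid.smul_def] using h3

end Aux12

set_option maxHeartbeats 1000000 in
/-- Fix `s ≥ 1`.  Let `M` be the free `R`-module on the generators
`x0, x1_1, …, x1_s, y1_1, …, y1_s, x2, y2, x3, y3`, and let `d : M → M` be the `R`-linear
map with `d x0 = U • y1_1`; `d x1_j = U² • y1_j + U • y1_{j+1}` for `1 ≤ j ≤ s - 1`;
`d x1_s = U² • y1_s`; `d x2 = x1_s + U • y2`; `d y2 = U • y1_s`; `d x3 = U • y3 + y2`;
`d y3 = y1_s`; and `d y1_j = 0` for all `j`.  Then `d ∘ d = 0`, the element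
`z = U^(s-1) • x0 + ∑_{j=1}^{s-1} U^(s-1-j) • x1_j + y2` is a cycle, and the quotient of
the homology `H = ker d / im d` by its `U`-torsion submodule is a free `R`-module of rank
one generated by the image of the class of `z`, i.e. the map `r ↦ r • [[z]]` from `R` to
that quotient is bijective. -/
theorem homology_mod_torsion_free_rank_one (s : ℕ) (hs : 1 ≤ s) (d : M s →ₗ[R] M s)
    (hx0 : d (x0 s) = U • y1 s ⟨0, hs⟩)
    (hx1 : ∀ j : Fin s, ∀ h : (j : ℕ) + 1 < s,
      d (x1 s j) = (U ^ 2) • y1 s j + U • y1 s ⟨(j : ℕ) + 1, h⟩)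
    (hx1s : d (x1 s ⟨s - 1, Nat.sub_lt hs Nat.one_pos⟩)
      = (U ^ 2) • y1 s ⟨s - 1, Nat.sub_lt hs Nat.one_pos⟩)
    (hx2 : d (x2 s) = x1 s ⟨s - 1, Nat.sub_lt hs Nat.one_pos⟩ + U • y2 s)
    (hy2 : d (y2 s) = U • y1 s ⟨s - 1, Nat.sub_lt hs Nat.one_pos⟩)
    (hx3 : d (x3 s) = U • y3 s + y2 s)
    (hy3 : d (y3 s) = y1 s ⟨s - 1, Nat.sub_lt hs Nat.one_pos⟩)
    (hy1 : ∀ j : Fin s, d (y1 s j) = 0) :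
    d ∘ₗ d = 0 ∧
    ∃ hz : (U ^ (s - 1)) • x0 s
        + (∑ j : Fin s, if (j : ℕ) + 1 < s then (U ^ (s - 2 - (j : ℕ))) • x1 s j else 0)
        + y2 s ∈ LinearMap.ker d,
      Function.Bijective
        (LinearMap.toSpanSingleton R
          ((LinearMap.ker d ⧸ (LinearMap.range d).comap (LinearMap.ker d).subtype) ⧸
            Submodule.torsion' R
              (LinearMap.ker d ⧸ (LinearMap.range d).comap (LinearMap.ker d).subtype)
              (Submonoid.powers U))
          (Submodule.Quotient.mk (Submodule.Quotient.mk
            ⟨(U ^ (s - 1)) • x0 s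
              + (∑ j : Fin s, if (j : ℕ) + 1 < s then (U ^ (s - 2 - (j : ℕ))) • x1 s j else 0)
              + y2 s, hz⟩))) := by
  have dd0 := dd_zero hs d hx0 hx1 hx1s hx2 hy2 hx3 hy3 hy1
  have hzk : Z s ∈ LinearMap.ker d := LinearMap.mem_ker.mpr (Z_cycle hs d hx0 hx1 hy2)
  refine ⟨dd0, hzk, ?_⟩
  have main := bijective_toSpanSingleton_abstract
    (H := LinearMap.ker d ⧸ (LinearMap.range d).comap (LinearMap.ker d).subtype)
    (Submodule.Quotient.mk (⟨Z s, hzk⟩ : LinearMap.ker d))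
    (by
      intro r n hrn
      rw [← Submodule.Quotient.mk_smul, ← Submodule.Quotient.mk_smul,
        Submodule.Quotient.mk_eq_zero, Submodule.mem_comap] at hrn
      obtain ⟨p, hp⟩ := hrn
      have h0 := co_x0 hs d hx0 hx1 hx1s hx2 hy2 hx3 hy3 hy1 p
      rw [hp] at h0
      simp only [Submodule.subtype_apply, SetLike.val_smul, Pi.smul_apply, smul_eq_mul,
        Z_inl] at h0
      simp only [if_true] at h0
      have hUn : (U : R) ^ n ≠ 0 := pow_ne_zero _ U_ne_zero
      have hUs : (U : R) ^ (s - 1) ≠ 0 := pow_ne_zero _ U_ne_zero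
      rcases mul_eq_zero.mp h0 with h1 | h1
      · exact absurd h1 hUn
      · rcases mul_eq_zero.mp h1 with h2 | h2
        · exact h2
        · exact absurd h2 hUs)
    (by
      intro x
      obtain ⟨w2, rfl⟩ := Submodule.Quotient.mk_surjective _ x
      obtain ⟨mm, hmm⟩ := w2
      obtain ⟨r, hr⟩ := core hs d hx0 hx1 hx1s hx2 hy2 hx3 hy3 hy1 mm (LinearMap.mem_ker.mp hmm)
      refine ⟨r, 2 * s, ?_⟩
      rw [← Submodule.Quotient.mk_smul, ← Submodule.Quotient.mk_sub,
        ← Submodule.Quotient.mk_smul, Submodule.Quotient.mk_eq_zero, Submodule.mem_comap]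
      have hcoe : ((LinearMap.ker d).subtype
            ((U ^ (2 * s)) • ((⟨mm, hmm⟩ : LinearMap.ker d) - r • ⟨Z s, hzk⟩)))
          = (U ^ (2 * s)) • (mm + r • Z s) := by
        have hneg : mm - r • Z s = mm + r • Z s := by
          rw [sub_eq_add_neg, neg_eq_self']
        simp only [Submodule.subtype_apply, SetLike.val_smul, AddSubgroupClass.coe_sub]
        rw [hneg]
      rw [hcoe]
      exact hr)
  exact main

end
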